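/- arXiv:2311.12637 — 4 statements merged into one kernel-verified Lean document; each statement's English description precedes it below -/
import Mathlib

section
/- Let Γ be a group acting by isometries on a metric space E and acting on a metric space P, and suppose the action of Γ on P is properly discontinuous (for every compact set K ⊆ P, the set of γ ∈ Γ with (γ • K) ∩ K ≠ ∅ is finite). Let f : E × P → ℝⁿ be a map such that: (1) f(γ • x, γ • p) = f(x, p) for all γ ∈ Γ, x ∈ E, p ∈ P; (2) for every x ∈ E the map p ↦ f(x, p) is continuous and the preimage of every compact subset of ℝⁿ under it is compact; (3) for every p ∈ P the map x ↦ f(x, p) is 1-Lipschitz. Then for every bounded set e ⊆ E and every compact set c ⊆ P, the set of γ ∈ Γ such that f(e × (γ • c)) meets the closed unit ball B of ℝⁿ centered at 0 is finite. -/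
open Pointwise

/-- Let `Γ` act by isometries on a metric space `E` and properly discontinuously on a metric
space `P`.  If `f : E × P → ℝⁿ` is `Γ`-invariant for the diagonal action, proper in the
`P`-variable for each `x ∈ E`, and `1`-Lipschitz in the `E`-variable for each `p ∈ P`, then
for every bounded `e ⊆ E` and compact `c ⊆ P` the set of `γ ∈ Γ` such that
`f (e × (γ • c))` meets the closed unit ball is finite. -/
theorem finite_translates_meeting_ball {Γ E P : Type*} [Group Γ]
    [MetricSpace E] [MetricSpace P] [MulAction Γ E] [MulAction Γ P]
    (hiso : ∀ γ : Γ, Isometry (fun x : E => γ • x))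
    (hpd : ∀ K : Set P, IsCompact K → {γ : Γ | (γ • K) ∩ K ≠ ∅}.Finite)
    {n : ℕ} (f : E × P → EuclideanSpace ℝ (Fin n))
    (hinv : ∀ (γ : Γ) (x : E) (p : P), f (γ • x, γ • p) = f (x, p))
    (hcont : ∀ x : E, Continuous (fun p => f (x, p)))
    (hproper : ∀ x : E, ∀ C : Set (EuclideanSpace ℝ (Fin n)), IsCompact C →
      IsCompact ((fun p => f (x, p)) ⁻¹' C))
    (hlip : ∀ p : P, LipschitzWith 1 (fun x => f (x, p))) :
    ∀ e : Set E, Bornology.IsBounded e → ∀ c : Set P, IsCompact c →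
      {γ : Γ | (f '' (e ×ˢ (γ • c)) ∩
        Metric.closedBall (0 : EuclideanSpace ℝ (Fin n)) 1).Nonempty}.Finite := by
  intro e he c hc
  rcases e.eq_empty_or_nonempty with rfl | ⟨x₀, hx₀⟩
  · convert Set.finite_empty
    ext γ
    simp
  · obtain ⟨r, hr⟩ := he.subset_closedBall x₀
    set K : Set P := (fun p => f (x₀, p)) ⁻¹' Metric.closedBall 0 (1 + r) with hK
    have hKc : IsCompact K := hproper x₀ _ (isCompact_closedBall _ _)
    have hK' : IsCompact (K ∪ c) := hKc.union hc
    refine (hpd (K ∪ c) hK').subset ?_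
    rintro γ ⟨y, ⟨⟨x, q⟩, ⟨hx, hq⟩, rfl⟩, hy⟩
    have hxr : dist x x₀ ≤ r := hr hx
    have hqK : q ∈ K := by
      have h1 : dist (f (x₀, q)) (f (x, q)) ≤ dist x₀ x := by
        simpa using (hlip q).dist_le_mul x₀ x
      have h2 : dist (f (x, q)) 0 ≤ 1 := Metric.mem_closedBall.mp hy
      have : dist (f (x₀, q)) 0 ≤ 1 + r :=
        calc dist (f (x₀, q)) 0 ≤ dist (f (x₀, q)) (f (x, q)) + dist (f (x, q)) 0 :=
              dist_triangle _ _ _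
          _ ≤ r + 1 := by
              have := dist_comm x₀ x ▸ h1
              linarith
          _ = 1 + r := by ring
      exact Metric.mem_closedBall.mpr this
    have : q ∈ (γ • (K ∪ c)) ∩ (K ∪ c) := by
      constructor
      · exact Set.smul_set_mono (Set.subset_union_right) hq
      · exact Set.mem_union_left _ hqK
    exact Set.nonempty_iff_ne_empty.mp ⟨q, this⟩
end

section
/- Let E be a metric space, P a Hausdorff topological space, and f : E × P → ℝⁿ a map such that for every x ∈ E the map p ↦ f(x, p) is continuous, and for every p ∈ P the map x ↦ f(x, p) is 1-Lipschitz. If there exists x₀ ∈ E such that p ↦ f(x₀, p) is proper (preimages of compact subsets of ℝⁿ are compact), then for every y ∈ E the map p ↦ f(y, p) is proper. -/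
/-- If `f : E × P → ℝⁿ` is continuous in the `P`-variable, `1`-Lipschitz in the `E`-variable,
and `p ↦ f (x₀, p)` is proper for some `x₀`, then `p ↦ f (y, p)` is proper for every `y ∈ E`. -/
theorem proper_slice_of_proper_slice {E P : Type*} [MetricSpace E]
    [TopologicalSpace P] [T2Space P] {n : ℕ}
    (f : E × P → EuclideanSpace ℝ (Fin n))
    (hc : ∀ x : E, Continuous (fun p => f (x, p)))
    (hlip : ∀ p : P, LipschitzWith 1 (fun x => f (x, p)))
    (hx₀ : ∃ x₀ : E, ∀ C : Set (EuclideanSpace ℝ (Fin n)), IsCompact C →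
      IsCompact ((fun p => f (x₀, p)) ⁻¹' C)) :
    ∀ y : E, Continuous (fun p => f (y, p)) ∧
      ∀ C : Set (EuclideanSpace ℝ (Fin n)), IsCompact C →
        IsCompact ((fun p => f (y, p)) ⁻¹' C) := by
  obtain ⟨x₀, h₀⟩ := hx₀
  intro y
  refine ⟨hc y, fun C hC => ?_⟩
  have hD : IsCompact (Metric.cthickening (dist x₀ y) C) := hC.cthickening
  refine IsCompact.of_isClosed_subset (h₀ _ hD)
    (hC.isClosed.preimage (hc y)) ?_
  intro p hp
  have h1 : dist (f (x₀, p)) (f (y, p)) ≤ dist x₀ y := by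
    simpa using (hlip p).dist_le_mul x₀ y
  exact Metric.mem_cthickening_of_dist_le _ _ _ _ hp h1
end

section
/- Let X be a compact metric space, A ⊆ X a nonempty closed subset, P a metric space, and f : P → C(A, ℝ) a continuous map such that f(p) is 1-Lipschitz for every p ∈ P. Define the set-valued map F from P to subsets of C(X, ℝ) by F(p) = {g ∈ C(X, ℝ) : g is 1-Lipschitz and g restricted to A equals f(p)}. Then F is lower semi-continuous: for every p₀ ∈ P and every open set U ⊆ C(X, ℝ) with F(p₀) ∩ U ≠ ∅, there is a neighborhood V of p₀ in P such that F(p) ∩ U ≠ ∅ for all p ∈ V. -/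
/-!
For a `1`-Lipschitz `h` on `A`, McShane's function `M h x = ⨆ a, h a - dist x a` is the
smallest `1`-Lipschitz extension of `h` to `X`, and `M h ≤ M h₀ + dist h h₀`. So if `g₀` is a
`1`-Lipschitz extension of `h₀`, then `max (M h) (g₀ - dist h h₀)` is a `1`-Lipschitz extension
of `h` within `dist h h₀` of `g₀`: from below by the second term, from above because
`M h ≤ M h₀ + dist h h₀ ≤ g₀ + dist h h₀`. By continuity of `f`, this extension lies in `U`
for `p` near `p₀`.
-/

open Metric

section LowerLipschitzExtension

variable {X : Type*} [MetricSpace X] {A : Set X}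

noncomputable def lowerLipschitzExtension (h : C(A, ℝ)) (x : X) : ℝ :=
  ⨆ a : A, (h a - dist x a)

lemma bddAbove_range_sub_dist [CompactSpace A] (h : C(A, ℝ)) (x : X) :
    BddAbove (Set.range fun a : A => h a - dist x a) := by
  obtain ⟨M, hM⟩ := (isCompact_range h.continuous).bddAbove
  exact ⟨M, by
    rintro _ ⟨a, rfl⟩
    linarith [hM ⟨a, rfl⟩, dist_nonneg (x := x) (y := a)]⟩

lemma sub_dist_le_lowerLipschitzExtension [CompactSpace A] (h : C(A, ℝ)) (x : X) (a : A) :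
    h a - dist x a ≤ lowerLipschitzExtension h x :=
  le_ciSup (bddAbove_range_sub_dist h x) a

variable [Nonempty A]

lemma lowerLipschitzExtension_le_of_lipschitzWith (h : C(A, ℝ)) {g : X → ℝ}
    (hg : LipschitzWith 1 g) (hgh : ∀ a : A, g a = h a) (x : X) :
    lowerLipschitzExtension h x ≤ g x :=
  ciSup_le fun a => by
    have := hg.le_add_mul a x
    rw [NNReal.coe_one, one_mul, dist_comm] at this
    linarith [hgh a]

variable [CompactSpace A]

lemma lipschitzWith_lowerLipschitzExtension (h : C(A, ℝ)) :
    LipschitzWith 1 (lowerLipschitzExtension h : X → ℝ) :=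
  LipschitzWith.of_le_add fun x y => ciSup_le fun a => by
    linarith [sub_dist_le_lowerLipschitzExtension h y a, dist_triangle_left y a x]

lemma lowerLipschitzExtension_coe {h : C(A, ℝ)} (hh : LipschitzWith 1 h) (a : A) :
    lowerLipschitzExtension h (a : X) = h a := by
  refine le_antisymm (ciSup_le fun b => ?_) ?_
  · have := hh.le_add_mul b a
    rw [NNReal.coe_one, one_mul, Subtype.dist_eq, dist_comm] at this
    linarith
  · simpa using sub_dist_le_lowerLipschitzExtension h a a

lemma lowerLipschitzExtension_le_add_dist (h₁ h₂ : C(A, ℝ)) (x : X) :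
    lowerLipschitzExtension h₁ x ≤ lowerLipschitzExtension h₂ x + dist h₁ h₂ :=
  ciSup_le fun a => by
    linarith [sub_dist_le_lowerLipschitzExtension h₂ x a,
      (abs_sub_le_iff.mp (h₁.dist_apply_le_dist (g := h₂) a)).1]

theorem exists_lipschitzWith_extension_dist_le [CompactSpace X] {h₀ h : C(A, ℝ)}
    (hh : LipschitzWith 1 h) {g₀ : C(X, ℝ)} (hg₀ : LipschitzWith 1 g₀)
    (hg₀h₀ : ∀ a : A, g₀ a = h₀ a) :
    ∃ g : C(X, ℝ), LipschitzWith 1 g ∧ (∀ a : A, g a = h a) ∧ dist g g₀ ≤ dist h h₀ := by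
  set δ := dist h h₀
  have hg : LipschitzWith 1 fun x => max (lowerLipschitzExtension h x) (g₀ x - δ) := by
    simpa using (lipschitzWith_lowerLipschitzExtension h).max (hg₀.sub (LipschitzWith.const δ))
  refine ⟨⟨_, hg.continuous⟩, hg, fun a => ?_,
    (ContinuousMap.dist_le dist_nonneg).mpr fun x => ?_⟩
  · have : g₀ a - δ ≤ h a := by
      linarith [hg₀h₀ a, (abs_sub_le_iff.mp (h.dist_apply_le_dist (g := h₀) a)).2]
    simp [lowerLipschitzExtension_coe hh a, this]
  · have hmove := lowerLipschitzExtension_le_add_dist h h₀ x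
    have hmin := lowerLipschitzExtension_le_of_lipschitzWith h₀ hg₀ hg₀h₀ x
    rw [ContinuousMap.coe_mk, Real.dist_eq, abs_sub_le_iff]
    constructor <;> cases max_cases (lowerLipschitzExtension h x) (g₀ x - δ) <;>
      linarith [dist_nonneg (x := h) (y := h₀)]

end LowerLipschitzExtension

/-- Let `X` be a compact metric space, `A ⊆ X` nonempty closed, `P` a metric space and
`f : P → C(A, ℝ)` continuous with each `f p` `1`-Lipschitz.  Then the set-valued map
`F p = {g ∈ C(X, ℝ) : g 1-Lipschitz, g|_A = f p}` is lower semi-continuous. -/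
theorem lipschitzExtensions_lowerSemicontinuous {X : Type*} [MetricSpace X]
    [CompactSpace X] (A : Set X) (hA : A.Nonempty) (hAclosed : IsClosed A)
    {P : Type*} [MetricSpace P]
    (f : P → C(A, ℝ)) (hf : Continuous f) (hlip : ∀ p : P, LipschitzWith 1 (f p)) :
    ∀ p₀ : P, ∀ U : Set C(X, ℝ), IsOpen U →
      ({g : C(X, ℝ) | LipschitzWith 1 g ∧ ∀ a : A, g a = f p₀ a} ∩ U).Nonempty →
      ∃ V ∈ nhds p₀, ∀ p ∈ V,
        ({g : C(X, ℝ) | LipschitzWith 1 g ∧ ∀ a : A, g a = f p a} ∩ U).Nonempty := by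
  have : Nonempty A := hA.to_subtype
  have : CompactSpace A := isCompact_iff_compactSpace.mp hAclosed.isCompact
  rintro p₀ U hU ⟨g₀, ⟨hg₀, hg₀A⟩, hg₀U⟩
  obtain ⟨ε, hε, hball⟩ := isOpen_iff.mp hU g₀ hg₀U
  refine ⟨f ⁻¹' ball (f p₀) ε, hf.continuousAt.preimage_mem_nhds (ball_mem_nhds _ hε),
    fun p hp => ?_⟩
  obtain ⟨g, hg, hgA, hdist⟩ := exists_lipschitzWith_extension_dist_le (hlip p) hg₀ hg₀A
  exact ⟨g, ⟨hg, hgA⟩, hball (hdist.trans_lt hp)⟩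
end

section
/- Let G be a group acting freely on a nonempty type S (i.e., g • s = s implies g = 1) with finitely many orbits, and let L be a left ℤ[G]-module. Then the ℤ-module of G-equivariant functions {λ : S → L | λ(g • s) = g • λ(s) for all g ∈ G, s ∈ S} (with pointwise addition) is isomorphic to the coinvariants (L ⊗_ℤ ℤ[S])_G of the tensor product over ℤ of L with the free ℤ-module ℤ[S] on S, where G acts diagonally by g • (x ⊗ s) = (g • x) ⊗ (g • s). -/
/-!
Fix a representative of every orbit. Freeness identifies `S` with `G × S/G`: each `s` is
`g • r` for a unique `g` and the representative `r` of its orbit. An equivariant function is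
determined by its values at the representatives, and these can be prescribed arbitrarily, so
the equivariant functions form `S/G → L`. In the coinvariants, `x ⊗ (g • r) = (g⁻¹ • x) ⊗ r`
moves every generator onto a representative; this identifies `(L ⊗ ℤ[S])_G` with `S/G →₀ L`.
With finitely many orbits the two agree.
-/

section

variable (G : Type*) [Group G] (S : Type*) [MulAction G S]
  (L : Type*) [AddCommGroup L] [Module (MonoidAlgebra ℤ G) L]

/-- The action of a group element `g` on a `ℤ[G]`-module `L`, as a `ℤ`-linear map. -/
noncomputable def actHom (g : G) : L →ₗ[ℤ] L :=
  (DistribMulAction.toAddMonoidHom L (MonoidAlgebra.of ℤ G g)).toIntLinearMap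

/-- The `ℤ`-module of `G`-equivariant functions `S → L`. -/
noncomputable def equivariantFunctions : Submodule ℤ (S → L) where
  carrier := {lam | ∀ (g : G) (s : S), lam (g • s) = MonoidAlgebra.of ℤ G g • lam s}
  add_mem' := by
    intro a b ha hb g s
    simp [ha g s, hb g s, smul_add]
  zero_mem' := by intro g s; simp
  smul_mem' := by
    intro z lam hlam g s
    simp only [Pi.smul_apply, hlam g s]
    exact (smul_comm z (MonoidAlgebra.of ℤ G g) (lam s))

/-- The permutation action of `g ∈ G` on the free `ℤ`-module `ℤ[S]` on the `G`-set `S`. -/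
noncomputable def permHom (g : G) : (S →₀ ℤ) →ₗ[ℤ] (S →₀ ℤ) :=
  Finsupp.lmapDomain ℤ ℤ (fun s => g • s)

/-- The diagonal action of `g ∈ G` on `L ⊗_ℤ ℤ[S]`, i.e. `g • (x ⊗ s) = (g • x) ⊗ (g • s)`. -/
noncomputable def diagActLS (g : G) :
    TensorProduct ℤ L (S →₀ ℤ) →ₗ[ℤ] TensorProduct ℤ L (S →₀ ℤ) :=
  TensorProduct.map (actHom G L g) (permHom G S g)

/-- The `ℤ`-submodule of `L ⊗_ℤ ℤ[S]` spanned by `{g • x − x}` for the diagonal action;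
the quotient by it is the coinvariants `(L ⊗_ℤ ℤ[S])_G`. -/
noncomputable def diagCoinvSubLS : Submodule ℤ (TensorProduct ℤ L (S →₀ ℤ)) :=
  Submodule.span ℤ
    {x | ∃ (g : G) (n : TensorProduct ℤ L (S →₀ ℤ)), x = diagActLS G S L g n - n}

open MulAction TensorProduct

section OrbitCoordinate

variable {G S}

theorem exists_smul_out_eq (s : S) : ∃ g : G, g • (⟦s⟧ : orbitRel.Quotient G S).out = s :=
  (orbitRel G S).symm (Quotient.mk_out s)

variable (G) in
/-- For a free action, `s ↦ (orbitCoord G s, ⟦s⟧)` identifies `S` with `G × S/G`. -/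
noncomputable def orbitCoord (s : S) : G := (exists_smul_out_eq (G := G) s).choose

theorem orbitCoord_smul_out (s : S) :
    orbitCoord G s • (⟦s⟧ : orbitRel.Quotient G S).out = s :=
  (exists_smul_out_eq s).choose_spec

theorem eq_orbitCoord_of_smul_out_eq (hfree : ∀ (g : G) (s : S), g • s = s → g = 1)
    {g : G} {s : S} (h : g • (⟦s⟧ : orbitRel.Quotient G S).out = s) : g = orbitCoord G s := by
  have hfix : ((orbitCoord G s)⁻¹ * g) • (⟦s⟧ : orbitRel.Quotient G S).out =
      (⟦s⟧ : orbitRel.Quotient G S).out := by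
    rw [mul_smul, h, inv_smul_eq_iff, orbitCoord_smul_out]
  rw [eq_comm, ← inv_mul_eq_one]
  exact hfree _ _ hfix

theorem orbitCoord_smul (hfree : ∀ (g : G) (s : S), g • s = s → g = 1) (g : G) (s : S) :
    orbitCoord G (g • s) = g * orbitCoord G s := by
  refine (eq_orbitCoord_of_smul_out_eq hfree ?_).symm
  rw [orbitRel.Quotient.quotient_smul_eq, mul_smul, orbitCoord_smul_out]

theorem orbitCoord_out (hfree : ∀ (g : G) (s : S), g • s = s → g = 1)
    (q : orbitRel.Quotient G S) : orbitCoord G q.out = 1 := by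
  refine (eq_orbitCoord_of_smul_out_eq hfree ?_).symm
  rw [Quotient.out_eq, one_smul]

end OrbitCoordinate

-- Over `ℤ` rather than a general ring, so that the module structure on the tensor product is
-- `AddCommGroup.toIntModule`, the one `→ₗ[ℤ]` synthesizes, and not `TensorProduct.instModule`.
theorem TensorProduct.ext_int_finsupp_single {M N ι : Type*} [AddCommGroup M] [AddCommGroup N]
    {f f' : M ⊗[ℤ] (ι →₀ ℤ) →ₗ[ℤ] N}
    (h : ∀ m i, f (m ⊗ₜ Finsupp.single i 1) = f' (m ⊗ₜ Finsupp.single i 1)) : f = f' := by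
  ext m i
  exact h m i

section Coinvariants

variable {G S L}

theorem actHom_apply (g : G) (x : L) : actHom G L g x = MonoidAlgebra.of ℤ G g • x := rfl

theorem actHom_mul (g h : G) (x : L) :
    actHom G L (g * h) x = actHom G L g (actHom G L h x) := by
  rw [actHom_apply, actHom_apply, actHom_apply, map_mul, mul_smul]

theorem actHom_one (x : L) : actHom G L 1 x = x := by
  rw [actHom_apply, map_one, one_smul]

theorem diagActLS_tmul_single (g : G) (x : L) (s : S) (n : ℤ) :
    diagActLS G S L g (x ⊗ₜ Finsupp.single s n) = actHom G L g x ⊗ₜ Finsupp.single (g • s) n := by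
  erw [diagActLS, map_tmul]
  rw [permHom, Finsupp.lmapDomain_apply, Finsupp.mapDomain_single]

theorem quotient_mk_diagActLS (g : G) (t : L ⊗[ℤ] (S →₀ ℤ)) :
    (Submodule.Quotient.mk (diagActLS G S L g t) : _ ⧸ diagCoinvSubLS G S L) =
      Submodule.Quotient.mk t :=
  (Submodule.Quotient.eq _).2 (Submodule.subset_span ⟨g, t, rfl⟩)

variable (G S L) in
noncomputable def toOrbitFinsupp : L ⊗[ℤ] (S →₀ ℤ) →ₗ[ℤ] (orbitRel.Quotient G S →₀ L) :=
  lift (Finsupp.linearCombination ℤ fun s =>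
    Finsupp.lsingle (⟦s⟧ : orbitRel.Quotient G S) ∘ₗ actHom G L (orbitCoord G s)⁻¹).flip

theorem toOrbitFinsupp_tmul_single (x : L) (s : S) :
    toOrbitFinsupp G S L (x ⊗ₜ Finsupp.single s 1) =
      Finsupp.single ⟦s⟧ (actHom G L (orbitCoord G s)⁻¹ x) := by
  erw [toOrbitFinsupp, lift.tmul]
  simp

theorem toOrbitFinsupp_comp_diagActLS (hfree : ∀ (g : G) (s : S), g • s = s → g = 1) (g : G) :
    toOrbitFinsupp G S L ∘ₗ diagActLS G S L g = toOrbitFinsupp G S L := by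
  refine TensorProduct.ext_int_finsupp_single fun x s => ?_
  rw [LinearMap.comp_apply, diagActLS_tmul_single, toOrbitFinsupp_tmul_single,
    toOrbitFinsupp_tmul_single, orbitCoord_smul hfree, orbitRel.Quotient.quotient_smul_eq,
    ← actHom_mul, mul_inv_rev, inv_mul_cancel_right]

theorem diagCoinvSubLS_le_ker_toOrbitFinsupp (hfree : ∀ (g : G) (s : S), g • s = s → g = 1) :
    diagCoinvSubLS G S L ≤ LinearMap.ker (toOrbitFinsupp G S L) := by
  rw [diagCoinvSubLS, Submodule.span_le]
  rintro _ ⟨g, t, rfl⟩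
  rw [SetLike.mem_coe, LinearMap.mem_ker, map_sub, ← LinearMap.comp_apply,
    toOrbitFinsupp_comp_diagActLS hfree, sub_self]

variable (G S) in
noncomputable def ofOrbitFinsupp (M : Type*) [AddCommGroup M] :
    (orbitRel.Quotient G S →₀ M) →ₗ[ℤ] M ⊗[ℤ] (S →₀ ℤ) :=
  Finsupp.lsum ℤ fun q => (TensorProduct.mk ℤ M (S →₀ ℤ)).flip (Finsupp.single q.out 1)

theorem ofOrbitFinsupp_single {M : Type*} [AddCommGroup M] (q : orbitRel.Quotient G S) (x : M) :
    ofOrbitFinsupp G S M (Finsupp.single q x) = x ⊗ₜ Finsupp.single q.out 1 :=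
  Finsupp.lsum_single _ _ _ _

variable (L) in
noncomputable def coinvariantsEquivFinsupp (hfree : ∀ (g : G) (s : S), g • s = s → g = 1) :
    (L ⊗[ℤ] (S →₀ ℤ) ⧸ diagCoinvSubLS G S L) ≃ₗ[ℤ] (orbitRel.Quotient G S →₀ L) :=
  LinearEquiv.ofLinearMap
    ((diagCoinvSubLS G S L).liftQ _ (diagCoinvSubLS_le_ker_toOrbitFinsupp hfree))
    ((diagCoinvSubLS G S L).mkQ ∘ₗ ofOrbitFinsupp G S L)
    (by
      refine Finsupp.lhom_ext' fun q => LinearMap.ext fun x => ?_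
      simp only [LinearMap.coe_comp, Function.comp_apply, LinearMap.id_apply, Finsupp.lsingle_apply,
        Submodule.mkQ_apply]
      rw [ofOrbitFinsupp_single, Submodule.liftQ_apply, toOrbitFinsupp_tmul_single, Quotient.out_eq,
        orbitCoord_out hfree, inv_one, actHom_one])
    (by
      refine Submodule.linearMap_qext _ (TensorProduct.ext_int_finsupp_single fun x s => ?_)
      simp only [LinearMap.coe_comp, Function.comp_apply, LinearMap.id_apply, Submodule.mkQ_apply]
      rw [Submodule.liftQ_apply, toOrbitFinsupp_tmul_single, ofOrbitFinsupp_single,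
        ← quotient_mk_diagActLS (orbitCoord G s), diagActLS_tmul_single, ← actHom_mul,
        mul_inv_cancel, actHom_one, orbitCoord_smul_out])

end Coinvariants

section EquivariantFunctions

variable {G S L}

theorem actHom_orbitCoord_mem_equivariantFunctions
    (hfree : ∀ (g : G) (s : S), g • s = s → g = 1) (f : orbitRel.Quotient G S → L) :
    (fun s => actHom G L (orbitCoord G s) (f ⟦s⟧)) ∈ equivariantFunctions G S L := by
  intro g s
  dsimp only
  rw [orbitRel.Quotient.quotient_smul_eq, orbitCoord_smul hfree, actHom_mul, actHom_apply]

variable (L) in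
noncomputable def equivariantFunctionsEquivPi (hfree : ∀ (g : G) (s : S), g • s = s → g = 1) :
    equivariantFunctions G S L ≃ₗ[ℤ] (orbitRel.Quotient G S → L) :=
  LinearEquiv.ofLinearMap
    (LinearMap.pi fun q => LinearMap.proj q.out ∘ₗ (equivariantFunctions G S L).subtype)
    (LinearMap.codRestrict _
      (LinearMap.pi fun s => actHom G L (orbitCoord G s) ∘ₗ LinearMap.proj ⟦s⟧)
      (actHom_orbitCoord_mem_equivariantFunctions hfree))
    (LinearMap.ext fun f => funext fun q => by
      change actHom G L (orbitCoord G q.out) (f ⟦q.out⟧) = f q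
      rw [Quotient.out_eq, orbitCoord_out hfree, actHom_one])
    (LinearMap.ext fun lam => Subtype.ext <| funext fun s => by
      change actHom G L (orbitCoord G s) ((lam : S → L) ⟦s⟧.out) = (lam : S → L) s
      rw [actHom_apply, ← lam.2, orbitCoord_smul_out])

end EquivariantFunctions

theorem equivariantFunctions_iso_coinvariants
    (hfree : ∀ (g : G) (s : S), g • s = s → g = 1)
    (horbits : Finite (MulAction.orbitRel.Quotient G S)) :
    Nonempty ((equivariantFunctions G S L) ≃ₗ[ℤ]
      (TensorProduct ℤ L (S →₀ ℤ) ⧸ diagCoinvSubLS G S L)) :=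
  ⟨equivariantFunctionsEquivPi L hfree ≪≫ₗ (Finsupp.linearEquivFunOnFinite ℤ L _).symm ≪≫ₗ
    (coinvariantsEquivFinsupp L hfree).symm⟩

end
end
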